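/- arXiv:2603.19866 — 2 statements merged into one kernel-verified Lean document; each statement's English description precedes it below -/
import Mathlib

section
/- Let λ₁, …, λ_K be distinct nonzero complex numbers and M₁, …, M_K nonnegative integers, and suppose ∑_k M(λ_k) λ_k^N = c for all positive integers N, where c is a positive real. Then c is a natural number, and moreover c equals the multiplicity M(1) of the value 1 (i.e., 1 appears among the λ_k with coefficient c, and all other coefficients vanish). -/
/-!
Subtracting the identities for exponents `N + 1` and `N + 2` shows that the coefficients
`M k λ_k (λ_k - 1)` have vanishing power sums `∑ₖ M k λ_k (λ_k - 1) λ_kⁱ` for all `i`;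
the Vandermonde matrix of the distinct `λ_k` being invertible, they all vanish, so `M k = 0`
unless `λ_k = 1`. At `N = 1` only the term with `λ_k = 1` survives, and `c` is its coefficient.
-/

open Finset

section PowerSums

variable {R : Type*} [CommRing R] {n : ℕ} {lam a : Fin n → R} {c : R}

theorem coeff_eq_zero_of_sum_mul_pow_eq_const [IsDomain R] (hinj : Function.Injective lam)
    (hnz : ∀ k, lam k ≠ 0) (hsum : ∀ N, 1 ≤ N → ∑ k, a k * lam k ^ N = c)
    {k : Fin n} (hk : lam k ≠ 1) : a k = 0 := by
  have hdiff : (fun j ↦ a j * lam j * (lam j - 1)) = 0 := by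
    refine Matrix.eq_zero_of_forall_pow_sum_mul_pow_eq_zero hinj fun i ↦ ?_
    calc ∑ j, a j * lam j * (lam j - 1) * lam j ^ (i : ℕ)
        = ∑ j, a j * lam j ^ ((i : ℕ) + 2) - ∑ j, a j * lam j ^ ((i : ℕ) + 1) := by
          rw [← sum_sub_distrib]
          exact sum_congr rfl fun j _ ↦ by ring
      _ = 0 := by rw [hsum _ (by omega), hsum _ (by omega), sub_self]
  have hk0 : a k * lam k * (lam k - 1) = 0 := congr_fun hdiff k
  simpa [hnz k, sub_eq_zero, hk] using hk0

theorem sum_mul_pow_eq_sum_filter_eq_one [DecidableEq R] (ha : ∀ k, lam k ≠ 1 → a k = 0) (N : ℕ) :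
    ∑ k, a k * lam k ^ N = ∑ k with lam k = 1, a k := by
  rw [sum_filter]
  refine sum_congr rfl fun k _ ↦ ?_
  by_cases hk : lam k = 1 <;> simp [hk, ha]

end PowerSums

theorem normalization_constant_is_integer_general (K : ℕ) (lam : Fin K → ℂ) (M : Fin K → ℕ)
    (hdist : Function.Injective lam) (hnz : ∀ k, lam k ≠ 0)
    (c : ℝ)
    (hsum : ∀ N : ℕ, 1 ≤ N → ∑ k, (M k : ℂ) * lam k ^ N = (c : ℂ)) :
    (∃ n : ℕ, c = n) ∧ (∀ k, lam k ≠ 1 → M k = 0) ∧ (∀ k, lam k = 1 → (M k : ℝ) = c) := by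
  have hM : ∀ k, lam k ≠ 1 → M k = 0 := fun k hk ↦ by
    exact_mod_cast coeff_eq_zero_of_sum_mul_pow_eq_const hdist hnz hsum hk
  have hc : c = ∑ k with lam k = 1, M k := by
    have h1 := hsum 1 le_rfl
    rw [sum_mul_pow_eq_sum_filter_eq_one (fun k hk ↦ by simp [hM k hk])] at h1
    exact_mod_cast h1.symm
  refine ⟨⟨_, hc⟩, hM, fun k hk ↦ ?_⟩
  have hfilter : ({j | lam j = 1} : Finset (Fin K)) = {k} := by
    ext j
    simp [← hk, hdist.eq_iff]
  rw [hc, hfilter, sum_singleton]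

theorem normalization_constant_is_integer (K : ℕ) (lam : Fin K → ℂ) (M : Fin K → ℕ)
    (hdist : Function.Injective lam) (hnz : ∀ k, lam k ≠ 0)
    (c : ℝ) (hc : 0 < c)
    (hsum : ∀ N : ℕ, 1 ≤ N → ∑ k, (M k : ℂ) * lam k ^ N = (c : ℂ)) :
    (∃ n : ℕ, c = n) ∧ (∀ k, lam k ≠ 1 → M k = 0) ∧ (∀ k, lam k = 1 → (M k : ℝ) = c) :=
  normalization_constant_is_integer_general K lam M hdist hnz c hsum
end

section
/- Let E be a D×D complex matrix such that trace(E^N) = 1 for all integers N > 1. Then E has exactly one nonzero eigenvalue (counted with algebraic multiplicity), and that eigenvalue equals 1. -/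
open Matrix Polynomial

lemma eval_charpoly_det {n : Type*} [DecidableEq n] [Fintype n] {R : Type*} [CommRing R]
    (M : Matrix n n R) (x : R) :
    M.charpoly.eval x = (Matrix.diagonal (fun _ => x) - M).det := by
  rw [Matrix.charpoly, ← Polynomial.coe_evalRingHom, RingHom.map_det]
  congr 1
  ext i j
  by_cases h : i = j
  · subst h; simp [Matrix.charmatrix_apply_eq, Matrix.diagonal_apply_eq]
  · simp [Matrix.charmatrix_apply_ne _ _ _ h, Matrix.diagonal_apply_ne _ h, h]

lemma roots_charpoly_pow {D : ℕ} (E : Matrix (Fin D) (Fin D) ℂ) {N : ℕ} (hN : 0 < N) :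
    (E ^ N).charpoly.roots = E.charpoly.roots.map (· ^ N) := by
  classical
  set r := E.charpoly.roots with hr
  have hcardr : Multiset.card r = D := by
    rw [hr, Polynomial.splits_iff_card_roots.mp (IsAlgClosed.splits E.charpoly),
      Matrix.charpoly_natDegree_eq_dim, Fintype.card_fin]
  have hchp : E.charpoly = (r.map fun a => X - C a).prod :=
    Polynomial.Splits.eq_prod_roots_of_monic (IsAlgClosed.splits _) E.charpoly_monic
  have heval : ∀ a : ℂ, E.charpoly.eval a = (r.map fun l => a - l).prod := by
    intro a
    conv_lhs => rw [hchp]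
    rw [Polynomial.eval_multiset_prod, Multiset.map_map]
    simp [Function.comp]
  have key : (E ^ N).charpoly = (r.map fun l => X - C (l ^ N)).prod := by
    apply Polynomial.funext
    intro x
    set q : ℂ[X] := X ^ N - C x with hq
    have hqm : q.Monic := monic_X_pow_sub_C x hN.ne'
    set s := q.roots with hs
    have hscard : Multiset.card s = N := by
      rw [hs, Polynomial.splits_iff_card_roots.mp (IsAlgClosed.splits q), hq,
        natDegree_X_pow_sub_C]
    have hqprod : q = (s.map fun a => X - C a).prod :=
      Polynomial.Splits.eq_prod_roots_of_monic (IsAlgClosed.splits q) hqm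
    have hqeval : ∀ l : ℂ, (s.map fun a => l - a).prod = l ^ N - x := by
      intro l
      have h := congrArg (Polynomial.eval l) hqprod
      rw [Polynomial.eval_multiset_prod, Multiset.map_map] at h
      simpa [hq, Function.comp] using h.symm
    -- determinant factorization
    have hdet : (E ^ N - Matrix.diagonal fun _ => x).det
        = (s.map fun a => (E - Matrix.diagonal fun _ => a).det).prod := by
      have h1 : E ^ N - Matrix.diagonal (fun _ => x) = Polynomial.aeval E q := by
        simp [hq, Matrix.algebraMap_eq_diagonal]
      set L := (s.map fun a => X - C a).toList with hL
      have hLP : L.prod = q := by rw [hL, Multiset.prod_toList, ← hqprod]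
      have h2 : (Polynomial.aeval E) q = (L.map (Polynomial.aeval E)).prod := by
        rw [← hLP, map_list_prod]
      have h3 : ((Polynomial.aeval E) q).det
          = ((L.map (Polynomial.aeval E)).map Matrix.det).prod := by
        rw [h2, ← Matrix.coe_detMonoidHom, map_list_prod]
      rw [h1, h3, List.map_map]
      have h4 : ((L.map (Matrix.det ∘ Polynomial.aeval E) : List ℂ) : Multiset ℂ)
          = s.map fun a => (E - Matrix.diagonal fun _ => a).det := by
        rw [← Multiset.map_coe, hL, Multiset.coe_toList, Multiset.map_map]
        refine Multiset.map_congr rfl fun a _ => ?_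
        simp [Function.comp, Matrix.algebraMap_eq_diagonal, Pi.algebraMap_def, Algebra.algebraMap_self]
      rw [← Multiset.prod_coe, h4]
    -- evaluate both sides
    have cmul : ∀ (t : Multiset ℂ) (c : ℂ) (f : ℂ → ℂ),
        (t.map fun a => c * f a).prod = c ^ Multiset.card t * (t.map f).prod := by
      intro t c f
      rw [show (t.map fun a => c * f a) = t.map fun a => (fun _ : ℂ => c) a * f a from rfl,
        Multiset.prod_map_mul, Multiset.map_const', Multiset.prod_replicate]
    have hfac : ∀ a : ℂ, (E - Matrix.diagonal fun _ => a).det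
        = (-1 : ℂ) ^ D * (r.map fun l => a - l).prod := by
      intro a
      rw [show E - Matrix.diagonal (fun _ => a) = -((Matrix.diagonal fun _ => a) - E) from
        (neg_sub _ _).symm, Matrix.det_neg, Fintype.card_fin, ← eval_charpoly_det, heval]
    have lhs1 : Polynomial.eval x (E ^ N).charpoly
        = (-1 : ℂ) ^ D * (s.map fun a => (E - Matrix.diagonal fun _ => a).det).prod := by
      rw [eval_charpoly_det, show (Matrix.diagonal fun _ => x) - E ^ N
        = -(E ^ N - Matrix.diagonal fun _ => x) from (neg_sub _ _).symm,
        Matrix.det_neg, Fintype.card_fin, hdet]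
    have step2 : (s.map fun a => (E - Matrix.diagonal fun _ => a).det).prod
        = ((-1 : ℂ) ^ D) ^ N * (s.map fun a => (r.map fun l => a - l).prod).prod := by
      rw [Multiset.map_congr rfl fun a _ => hfac a, cmul, hscard]
    have step3 : (s.map fun a => (r.map fun l => a - l).prod).prod
        = ((-1 : ℂ) ^ N) ^ D * ((-1 : ℂ) ^ D * (r.map fun l => x - l ^ N).prod) := by
      rw [Multiset.prod_map_prod_map]
      have inner : ∀ l : ℂ, (s.map fun a => a - l).prod = (-1 : ℂ) ^ N * (l ^ N - x) := by
        intro l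
        rw [show (s.map fun a => a - l) = s.map fun a => (-1 : ℂ) * (l - a) from
          Multiset.map_congr rfl fun a _ => by ring, cmul, hscard, hqeval]
      rw [Multiset.map_congr rfl fun l _ => inner l, cmul, hcardr]
      congr 1
      rw [show (r.map fun l => l ^ N - x) = r.map fun l => (-1 : ℂ) * (x - l ^ N) from
        Multiset.map_congr rfl fun l _ => by ring, cmul, hcardr]
    have rhs1 : Polynomial.eval x ((r.map fun l => X - C (l ^ N)).prod)
        = (r.map fun l => x - l ^ N).prod := by
      rw [Polynomial.eval_multiset_prod, Multiset.map_map]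
      refine congrArg _ (Multiset.map_congr rfl fun l _ => ?_)
      simp
    rw [lhs1, step2, step3, rhs1]
    set Q := (r.map fun l => x - l ^ N).prod with hQ
    rw [← pow_mul, ← pow_mul, mul_comm N D]
    have h1 : ((-1 : ℂ) ^ (D * N)) * ((-1 : ℂ) ^ (D * N)) = 1 := by
      rw [← pow_add, ← two_mul, pow_mul]; norm_num
    have h2 : ((-1 : ℂ) ^ D) * ((-1 : ℂ) ^ D) = 1 := by
      rw [← pow_add, ← two_mul, pow_mul]; norm_num
    calc (-1 : ℂ) ^ D * ((-1 : ℂ) ^ (D * N) * ((-1 : ℂ) ^ (D * N) * ((-1 : ℂ) ^ D * Q)))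
        = (((-1 : ℂ) ^ D * (-1 : ℂ) ^ D) * ((-1 : ℂ) ^ (D * N) * (-1 : ℂ) ^ (D * N))) * Q := by
          ring
      _ = Q := by rw [h1, h2, one_mul, one_mul]
  rw [key]
  have : (r.map fun l => X - C (l ^ N)) = (r.map (· ^ N)).map (fun a => X - C a) := by
    rw [Multiset.map_map]; rfl
  rw [this, Polynomial.roots_multiset_prod_X_sub_C]


lemma power_sums_multiset (t : Multiset ℂ) (ht0 : ∀ a ∈ t, a ≠ 0)
    (h : ∀ N : ℕ, 1 < N → (t.map (· ^ N)).sum = 1) :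
    t = {1} := by
  classical
  set S : Finset ℂ := insert 1 t.toFinset with hS
  have h1S : (1 : ℂ) ∈ S := Finset.mem_insert_self _ _
  set d : ℂ → ℂ := fun μ => (t.count μ : ℂ) - if μ = 1 then 1 else 0 with hd
  -- power sums over S
  have hsum : ∀ N : ℕ, (t.map (· ^ N)).sum = ∑ μ ∈ S, (t.count μ : ℂ) * μ ^ N := by
    intro N
    rw [Finset.sum_multiset_map_count]
    rw [Finset.sum_subset (Finset.subset_insert _ _)]
    · refine Finset.sum_congr rfl fun μ _ => ?_
      simp [nsmul_eq_mul]
    · intro μ _ hμ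
      rw [Multiset.count_eq_zero_of_notMem (fun hm => hμ (Multiset.mem_toFinset.mpr hm))]
      simp
  have hA : ∀ N : ℕ, 1 < N → ∑ μ ∈ S, d μ * μ ^ N = 0 := by
    intro N hN
    have := h N hN
    rw [hsum N] at this
    have h2 : ∑ μ ∈ S, (if μ = 1 then (1 : ℂ) else 0) * μ ^ N = 1 := by
      rw [Finset.sum_congr rfl (fun μ _ =>
          show (if μ = 1 then (1:ℂ) else 0) * μ ^ N = if μ = 1 then μ ^ N else 0 by
            split <;> simp_all),
        Finset.sum_ite_eq' S 1 (fun μ => μ ^ N), if_pos h1S, one_pow]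
    calc ∑ μ ∈ S, d μ * μ ^ N
        = (∑ μ ∈ S, (t.count μ : ℂ) * μ ^ N) - ∑ μ ∈ S, (if μ = 1 then (1:ℂ) else 0) * μ ^ N := by
          rw [← Finset.sum_sub_distrib]
          exact Finset.sum_congr rfl fun μ _ => by rw [hd]; ring
      _ = 1 - 1 := by rw [this, h2]
      _ = 0 := by ring
  have hB : ∀ q : ℂ[X], ∑ μ ∈ S, d μ * μ ^ 2 * q.eval μ = 0 := by
    intro q
    have hrw : ∀ μ ∈ S, d μ * μ ^ 2 * q.eval μ
        = ∑ i ∈ Finset.range (q.natDegree + 1), q.coeff i * (d μ * μ ^ (i + 2)) := by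
      intro μ _
      rw [Polynomial.eval_eq_sum_range, Finset.mul_sum]
      exact Finset.sum_congr rfl fun i _ => by ring
    rw [Finset.sum_congr rfl hrw, Finset.sum_comm]
    refine Finset.sum_eq_zero fun i _ => ?_
    rw [← Finset.mul_sum, hA (i + 2) (by omega), mul_zero]
  have hC : ∀ μ₀ ∈ S, d μ₀ = 0 := by
    intro μ₀ hμ₀
    have hinj : Set.InjOn id (S : Set ℂ) := Function.injective_id.injOn
    have hne : μ₀ ≠ 0 := by
      rcases Finset.mem_insert.mp hμ₀ with h1 | h1
      · rw [h1]; exact one_ne_zero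
      · exact ht0 μ₀ (Multiset.mem_toFinset.mp h1)
    have hb := hB (Lagrange.basis S id μ₀)
    rw [Finset.sum_eq_single μ₀
      (fun b hb hbne => by
        rw [show Polynomial.eval b (Lagrange.basis S id μ₀) = 0 from
          Lagrange.eval_basis_of_ne (v := id) (fun h => hbne h.symm) hb, mul_zero])
      (fun h => absurd hμ₀ h)] at hb
    rw [show Polynomial.eval μ₀ (Lagrange.basis S id μ₀) = 1 from
      Lagrange.eval_basis_self (v := id) hinj hμ₀, mul_one] at hb
    rcases mul_eq_zero.mp hb with h1 | h1
    · exact h1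
    · exact absurd h1 (pow_ne_zero 2 hne)
  have hcount : ∀ μ ∈ S, (t.count μ : ℂ) = if μ = 1 then 1 else 0 := by
    intro μ hμ
    have h1 := hC μ hμ
    rw [hd] at h1
    exact sub_eq_zero.mp h1
  have hcount1 : t.count 1 = 1 := by
    have h1 := hcount 1 h1S
    rw [if_pos rfl] at h1
    exact_mod_cast h1
  have hcount2 : ∀ μ : ℂ, μ ≠ 1 → t.count μ = 0 := by
    intro μ hμ
    by_cases hm : μ ∈ t.toFinset
    · have h1 := hcount μ (Finset.mem_insert_of_mem hm)
      rw [if_neg hμ] at h1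
      exact_mod_cast h1
    · exact Multiset.count_eq_zero_of_notMem fun hin => hm (Multiset.mem_toFinset.mpr hin)
  ext a
  by_cases ha : a = 1
  · subst ha; simp [hcount1, Multiset.count_singleton]
  · simp [hcount2 a ha, Multiset.count_singleton, ha]

theorem single_unit_eigenvalue (D : ℕ) (E : Matrix (Fin D) (Fin D) ℂ)
    (htr : ∀ N : ℕ, 1 < N → (E ^ N).trace = 1) :
    (E.charpoly.roots.filter (· ≠ 0)) = {1} := by
  classical
  set t := E.charpoly.roots.filter (· ≠ 0) with htdef
  have ht0 : ∀ a ∈ t, a ≠ 0 := fun a ha => (Multiset.mem_filter.mp ha).2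
  apply power_sums_multiset t ht0
  intro N hN
  have h1 : (E ^ N).trace = (E.charpoly.roots.map (· ^ N)).sum := by
    rw [Matrix.trace_eq_sum_roots_charpoly, roots_charpoly_pow E (by omega)]
  have h2 : (E.charpoly.roots.map (· ^ N)).sum = (t.map (· ^ N)).sum := by
    conv_lhs => rw [← Multiset.filter_add_not (· ≠ 0) E.charpoly.roots]
    rw [Multiset.map_add, Multiset.sum_add, ← htdef]
    have hz : ((E.charpoly.roots.filter (fun a => ¬ a ≠ 0)).map (· ^ N)).sum = 0 := by
      apply Multiset.sum_eq_zero
      intro x hx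
      obtain ⟨a, ha, rfl⟩ := Multiset.mem_map.mp hx
      have ha0 : a = 0 := not_not.mp (Multiset.mem_filter.mp ha).2
      rw [ha0]
      exact zero_pow (by omega)
    rw [hz, add_zero]
  rw [← h2, ← h1]
  exact htr N hN
end
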